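/- Let Ω be a simply connected open subset of D on which A(z)² − λ² does not vanish, and fix x₀ ∈ Ω. Then the two series w_even^±(x,h;x₀) = Σ_{n≥0} w_{2n}^±(x,h) and w_odd^±(x,h;x₀) = Σ_{n≥0} w_{2n−1}^±(x,h) converge absolutely in a neighborhood of x₀; moreover w_even^±(·,h;x₀) and w_odd^±(·,h;x₀) extend to analytic functions on all of Ω. -/

import Mathlib

/-!
Shift the indices: `W m = w_{m-1}` satisfies `W (m+1)' = c W m - a W (m+1)`, where the damping
term `a = ±2 sq / h` is present only for odd `m`. Along a segment from `y` to
`x`, the integrating factor `exp ∫ a` turns each step of the hierarchy into a Volterra integral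
whose kernel is bounded independently of `m`; integrating the polynomial bound of the previous
step gains a factor `1 / (m + 1)`, so `‖W m y‖ ≤ C ^ m / m!` propagates to
`‖W m x‖ ≤ E ^ m / m!` uniformly on a closed ball around `y` in `Ω`.
Such factorial bounds hold at `x₀`, where `W m x₀ = 0` for `m ≠ 1`, hence, `Ω` being connected,
locally uniformly on all of `Ω`. The even and odd subseries are then dominated locally by
subseries of `∑ E ^ m / m!`, so they converge locally normally and their sums are
holomorphic on `Ω`.
-/

open Complex Set Filter

noncomputable section

/-- The exact WKB recurrence for the family `w_n^±` (`n ≥ -1`), with sign `s = ±1`,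
coefficient `c = H'/H`, phase derivative `z' = sq`, semiclassical parameter `h`, and
base point `x₀`. -/
def WKBRec (Ω : Set ℂ) (h : ℝ) (s : ℂ) (sq H : ℂ → ℂ) (x₀ : ℂ) (w : ℤ → ℂ → ℂ) : Prop :=
  (∀ x, w (-1) x = 0) ∧ (∀ x, w 0 x = 1) ∧
  (∀ n : ℤ, 1 ≤ n → ∀ x ∈ Ω,
      HasDerivAt (w (2 * n)) (deriv H x / H x * w (2 * n - 1) x) x ∧
      HasDerivAt (w (2 * n - 1))
        (deriv H x / H x * w (2 * n - 2) x - s * (2 * sq x / (h : ℂ)) * w (2 * n - 1) x) x) ∧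
  (∀ n : ℤ, 1 ≤ n → w n x₀ = 0)

open intervalIntegral MeasureTheory Topology Nat Metric

theorem integral_mul_add_mul_pow (M C t : ℝ) (m : ℕ) :
    ∫ τ in (0 : ℝ)..t, M * (C + M * τ) ^ m =
      ((C + M * t) ^ (m + 1) - C ^ (m + 1)) / (m + 1) := by
  have hderiv (τ : ℝ) :
      HasDerivAt (fun σ => (C + M * σ) ^ (m + 1) / (m + 1)) (M * (C + M * τ) ^ m) τ := by
    refine ((((hasDerivAt_id τ).const_mul M).const_add C).pow (m + 1)).div_const _
      |>.congr_deriv ?_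
    simp
    field_simp
  rw [integral_eq_sub_of_hasDerivAt (fun τ _ => hderiv τ)
    (Continuous.intervalIntegrable (by fun_prop) _ _), sub_div]
  simp

theorem hasDerivAt_integral_of_continuousOn {E : Type*} [NormedAddCommGroup E]
    [NormedSpace ℝ E] [CompleteSpace E] {f : ℝ → E} {U : Set ℝ} (hU : IsOpen U)
    (hf : ContinuousOn f U) {a b : ℝ} (hab : uIcc a b ⊆ U) :
    HasDerivAt (fun t => ∫ τ in a..t, f τ) (f b) b :=
  have hb : b ∈ U := hab right_mem_uIcc
  integral_hasDerivAt_right ((hf.mono hab).intervalIntegrable)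
    (hf.stronglyMeasurableAtFilter hU b hb) (hf.continuousAt (hU.mem_nhds hb))

theorem norm_le_of_hasDerivAt_sub_mul {u b q Q : ℝ → ℂ} {β : ℝ → ℝ} {t L : ℝ} (ht : 0 ≤ t)
    (hQ : ∀ τ ∈ Icc 0 t, HasDerivAt Q (q τ) τ) (hQ₀ : Q 0 = 0)
    (hQL : ∀ τ ∈ Icc 0 t, ‖Q τ‖ ≤ L)
    (hu : ∀ τ ∈ Icc 0 t, HasDerivAt u (b τ - q τ * u τ) τ) (hb : ContinuousOn b (Icc 0 t))
    (hbβ : ∀ τ ∈ Icc 0 t, ‖b τ‖ ≤ β τ) (hβ : IntervalIntegrable β volume 0 t) :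
    ‖u t‖ ≤ Real.exp L * ‖u 0‖ + Real.exp (2 * L) * ∫ τ in (0 : ℝ)..t, β τ := by
  have hexp (τ) (hτ : τ ∈ Icc 0 t) : ‖exp (Q τ)‖ ≤ Real.exp L ∧ ‖exp (-Q τ)‖ ≤ Real.exp L := by
    refine ⟨?_, ?_⟩ <;> refine (norm_exp_le_exp_norm _).trans (Real.exp_le_exp.mpr ?_)
    · exact hQL τ hτ
    · simpa using hQL τ hτ
  have hIcc : uIcc 0 t = Icc 0 t := uIcc_of_le ht
  -- `exp Q` is an integrating factor.
  have hftc : ∫ τ in (0 : ℝ)..t, exp (Q τ) * b τ = exp (Q t) * u t - u 0 := by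
    rw [integral_eq_sub_of_hasDerivAt (f := fun τ => exp (Q τ) * u τ), hQ₀, exp_zero, one_mul]
    · intro τ hτ
      rw [hIcc] at hτ
      exact ((hQ τ hτ).cexp.mul (hu τ hτ)).congr_deriv (by ring)
    · refine ContinuousOn.intervalIntegrable ?_
      rw [hIcc]
      exact (continuous_exp.comp_continuousOn fun τ hτ =>
        (hQ τ hτ).continuousAt.continuousWithinAt).mul hb
  have hint : ‖∫ τ in (0 : ℝ)..t, exp (Q τ) * b τ‖ ≤ ∫ τ in (0 : ℝ)..t, Real.exp L * β τ := by
    refine norm_integral_le_of_norm_le ht (ae_of_all _ fun τ hτ => ?_) (hβ.const_mul _)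
    rw [norm_mul]
    exact mul_le_mul (hexp τ (Ioc_subset_Icc_self hτ)).1 (hbβ τ (Ioc_subset_Icc_self hτ))
      (norm_nonneg _) (Real.exp_pos L).le
  have hu_t : u t = exp (-Q t) * (u 0 + ∫ τ in (0 : ℝ)..t, exp (Q τ) * b τ) := by
    rw [hftc, add_sub_cancel, ← mul_assoc, ← exp_add, neg_add_cancel, exp_zero, one_mul]
  calc ‖u t‖ ≤ Real.exp L * (‖u 0‖ + ∫ τ in (0 : ℝ)..t, Real.exp L * β τ) := by
        rw [hu_t, norm_mul]
        exact mul_le_mul (hexp t ⟨ht, le_rfl⟩).2 ((norm_add_le _ _).trans (by gcongr))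
          (norm_nonneg _) (Real.exp_pos L).le
    _ = Real.exp L * ‖u 0‖ + Real.exp (2 * L) * ∫ τ in (0 : ℝ)..t, β τ := by
        rw [intervalIntegral.integral_const_mul, two_mul, Real.exp_add]
        ring

theorem norm_le_pow_div_factorial_of_hasDerivAt {u : ℕ → ℝ → ℂ} {p : ℝ → ℂ}
    {q Q : ℕ → ℝ → ℂ} {M L C : ℝ} (hM : 0 ≤ M) (hu₀ : u 0 = 0)
    (hp : ContinuousOn p (Icc 0 1)) (hpM : ∀ τ ∈ Icc (0 : ℝ) 1, ‖p τ‖ ≤ M)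
    (hQ : ∀ m, ∀ τ ∈ Icc (0 : ℝ) 1, HasDerivAt (Q m) (q m τ) τ) (hQ₀ : ∀ m, Q m 0 = 0)
    (hQL : ∀ m, ∀ τ ∈ Icc (0 : ℝ) 1, ‖Q m τ‖ ≤ L)
    (hu : ∀ m, ∀ τ ∈ Icc (0 : ℝ) 1,
      HasDerivAt (u (m + 1)) (p τ * u m τ - q m τ * u (m + 1) τ) τ)
    (hinit : ∀ m, ‖u m 0‖ ≤ C ^ m / m !) (m : ℕ) {t : ℝ} (ht : t ∈ Icc (0 : ℝ) 1) :
    ‖u m t‖ ≤ (Real.exp (2 * L) * (C + M * t)) ^ m / m ! := by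
  set K := Real.exp (2 * L)
  have hL : 0 ≤ L := (norm_nonneg _).trans (hQL 0 0 ⟨le_rfl, zero_le_one⟩)
  have hKL (m : ℕ) : Real.exp L ≤ K ^ (m + 1) := calc
    Real.exp L ≤ K := Real.exp_le_exp.mpr (by linarith)
    _ ≤ K ^ (m + 1) := le_self_pow₀ (Real.one_le_exp (by linarith)) (by omega)
  have hcont : ∀ m, ContinuousOn (u m) (Icc 0 1)
    | 0 => hu₀ ▸ continuousOn_const
    | m + 1 => fun τ hτ => (hu m τ hτ).continuousAt.continuousWithinAt
  induction m generalizing t with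
  | zero => simp [hu₀]
  | succ m ih =>
    obtain ⟨ht₀, ht₁⟩ := ht
    have hsub : Icc 0 t ⊆ Icc (0 : ℝ) 1 := Icc_subset_Icc_right ht₁
    have hb (τ) (hτ : τ ∈ Icc 0 t) : ‖p τ * u m τ‖ ≤ K ^ m / m ! * (M * (C + M * τ) ^ m) := by
      rw [norm_mul]
      calc ‖p τ‖ * ‖u m τ‖ ≤ M * ((K * (C + M * τ)) ^ m / m !) :=
            mul_le_mul (hpM τ (hsub hτ)) (ih (hsub hτ)) (norm_nonneg _) hM
        _ = K ^ m / m ! * (M * (C + M * τ) ^ m) := by rw [mul_pow]; ring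
    have hduhamel := norm_le_of_hasDerivAt_sub_mul ht₀ (fun τ hτ => hQ m τ (hsub hτ)) (hQ₀ m)
      (fun τ hτ => hQL m τ (hsub hτ)) (fun τ hτ => hu m τ (hsub hτ))
      ((hp.mul (hcont m)).mono hsub) hb (Continuous.intervalIntegrable (by fun_prop) _ _)
    rw [intervalIntegral.integral_const_mul, integral_mul_add_mul_pow] at hduhamel
    set P := (C + M * t) ^ (m + 1)
    calc ‖u (m + 1) t‖
        ≤ Real.exp L * ‖u (m + 1) 0‖ + K * (K ^ m / m ! * ((P - C ^ (m + 1)) / (m + 1))) :=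
          hduhamel
      _ ≤ K ^ (m + 1) * (C ^ (m + 1) / (m + 1)!)
            + K ^ (m + 1) * ((P - C ^ (m + 1)) / (m + 1)!) := by
          refine add_le_add (mul_le_mul (hKL m) (hinit (m + 1)) (norm_nonneg _)
            (pow_pos (Real.exp_pos _) _).le) (le_of_eq ?_)
          rw [factorial_succ, cast_mul, cast_succ, mul_comm _ (m ! : ℝ), ← div_div]
          ring
      _ = (K * (C + M * t)) ^ (m + 1) / (m + 1)! := by rw [mul_pow]; ring

theorem IsPreconnected.induction_closedBall {α : Type*} [PseudoMetricSpace α] {Ω : Set α}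
    {P : α → Prop} (hΩ : IsOpen Ω) (hΩc : IsPreconnected Ω)
    (hP : ∀ y r, closedBall y r ⊆ Ω → P y → ∀ x ∈ closedBall y r, P x) {x₀ y : α}
    (hx₀ : x₀ ∈ Ω) (hy : y ∈ Ω) (h₀ : P x₀) : P y := by
  refine hΩc.induction₂' (fun a b => P a → P b) (fun z hz => ?_)
    (fun _ _ _ _ _ _ hab hbc => hbc ∘ hab) hx₀ hy h₀
  obtain ⟨r, hr, hsub⟩ := nhds_basis_closedBall.mem_iff.mp (hΩ.mem_nhds hz)
  filter_upwards [mem_nhdsWithin_of_mem_nhds (ball_mem_nhds z (half_pos hr))] with x hx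
  rw [mem_ball] at hx
  refine ⟨fun hPz => hP z r hsub hPz x (ball_subset_closedBall (ball_subset_ball
    (half_le_self hr.le) (mem_ball.mpr hx))), fun hPx => hP x (r / 2) ?_ hPx z ?_⟩
  · exact (closedBall_subset_closedBall' (by linarith)).trans hsub
  · exact mem_closedBall_comm.mp hx.le

theorem analyticOnNhd_tsum_of_locally_summable_bound {ι : Type*} {f : ι → ℂ → ℂ}
    {Ω : Set ℂ} (hΩ : IsOpen Ω) (hf : ∀ i, DifferentiableOn ℂ (f i) Ω)
    (hbound : ∀ y ∈ Ω, ∃ u : ι → ℝ, Summable u ∧ ∀ᶠ x in 𝓝 y, ∀ i, ‖f i x‖ ≤ u i) :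
    AnalyticOnNhd ℂ (fun x => ∑' i, f i x) Ω := by
  refine DifferentiableOn.analyticOnNhd (fun y hy => ?_) hΩ
  obtain ⟨u, hu, hev⟩ := hbound y hy
  obtain ⟨V, hV, hVo, hyV⟩ := _root_.eventually_nhds_iff.mp hev
  exact ((differentiableOn_tsum_of_summable_norm hu (fun i => (hf i).mono inter_subset_right)
    (hVo.inter hΩ) fun i x hx => hV x hx.1 i).differentiableAt
    ((hVo.inter hΩ).mem_nhds ⟨hyV, hy⟩)).differentiableWithinAt

theorem summable_norm_comp_of_norm_le_pow_div_factorial {E : Type*} [SeminormedAddCommGroup E]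
    {v : ℕ → E} {C : ℝ} (hv : ∀ m, ‖v m‖ ≤ C ^ m / m !) {k : ℕ → ℕ}
    (hk : Function.Injective k) : Summable fun n => ‖v (k n)‖ :=
  ((Real.summable_pow_div_factorial C).comp_injective hk).of_nonneg_of_le
    (fun _ => norm_nonneg _) fun n => hv (k n)

theorem analyticOnNhd_tsum_comp_of_norm_le_pow_div_factorial {W : ℕ → ℂ → ℂ} {Ω : Set ℂ}
    (hΩ : IsOpen Ω) (hW : ∀ m, DifferentiableOn ℂ (W m) Ω)
    (hbound : ∀ y ∈ Ω, ∃ E, ∀ᶠ x in 𝓝 y, ∀ m, ‖W m x‖ ≤ E ^ m / m !) {k : ℕ → ℕ}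
    (hk : Function.Injective k) : AnalyticOnNhd ℂ (fun x => ∑' n, W (k n) x) Ω :=
  analyticOnNhd_tsum_of_locally_summable_bound hΩ (fun n => hW (k n)) fun y hy =>
    (hbound y hy).elim fun E hE => ⟨_, (Real.summable_pow_div_factorial E).comp_injective hk,
      hE.mono fun _ hx n => hx (k n)⟩

theorem exists_primitive_comp_lineMap {a : ℂ → ℂ} {Ω : Set ℂ} (hΩ : IsOpen Ω)
    (ha : ContinuousOn a Ω) {y x : ℂ} (hseg : segment ℝ y x ⊆ Ω) {Ma : ℝ}
    (hMa : ∀ z ∈ segment ℝ y x, ‖a z‖ ≤ Ma) :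
    ∃ Q : ℝ → ℂ, Q 0 = 0 ∧
      (∀ τ ∈ Icc (0 : ℝ) 1, HasDerivAt Q (a (AffineMap.lineMap y x τ) * (x - y)) τ) ∧
      ∀ τ ∈ Icc (0 : ℝ) 1, ‖Q τ‖ ≤ Ma * ‖x - y‖ := by
  set γ : ℝ → ℂ := ⇑(AffineMap.lineMap (k := ℝ) y x)
  have hγseg (τ : ℝ) (hτ : τ ∈ Icc (0 : ℝ) 1) : γ τ ∈ segment ℝ y x :=
    lineMap_mem_segment ℝ y x hτ
  have hγcont : Continuous γ := AffineMap.lineMap_continuous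
  refine ⟨fun τ => ∫ σ in (0 : ℝ)..τ, a (γ σ) * (x - y), integral_same, fun τ hτ => ?_,
    fun τ hτ => ?_⟩
  · refine hasDerivAt_integral_of_continuousOn (hΩ.preimage hγcont)
      ((ha.comp hγcont.continuousOn (mapsTo_preimage γ Ω)).mul continuousOn_const)
      fun σ hσ => hseg (hγseg σ ?_)
    rw [uIcc_of_le hτ.1] at hσ
    exact Icc_subset_Icc_right hτ.2 hσ
  refine (intervalIntegral.norm_integral_le_of_norm_le_const (C := Ma * ‖x - y‖)
    fun σ hσ => ?_).trans ?_
  · rw [uIoc_of_le hτ.1] at hσ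
    rw [norm_mul]
    exact mul_le_mul_of_nonneg_right (hMa _ (hγseg σ ⟨hσ.1.le, hσ.2.trans hτ.2⟩))
      (norm_nonneg _)
  · have hMa₀ : 0 ≤ Ma := (norm_nonneg _).trans (hMa y (left_mem_segment ℝ y x))
    rw [sub_zero, abs_of_nonneg hτ.1]
    exact mul_le_of_le_one_right (by positivity) hτ.2

/-- `W m` stands for `w_{m-1}`, so that the family starts at `W 0 = w_{-1} = 0`; the damping
coefficient `a` acts exactly on the odd-indexed `w`. -/
structure IsWKBHierarchy (Ω : Set ℂ) (c a : ℂ → ℂ) (W : ℕ → ℂ → ℂ) : Prop where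
  zero : W 0 = 0
  hasDerivAt : ∀ m : ℕ, ∀ x ∈ Ω,
    HasDerivAt (W (m + 1)) (c x * W m x - (if Odd m then a x else 0) * W (m + 1) x) x

namespace IsWKBHierarchy

variable {Ω : Set ℂ} {c a : ℂ → ℂ} {W : ℕ → ℂ → ℂ}

theorem differentiableOn (hW : IsWKBHierarchy Ω c a W) : ∀ m, DifferentiableOn ℂ (W m) Ω
  | 0 => hW.zero ▸ differentiableOn_const 0
  | m + 1 => fun x hx => (hW.hasDerivAt m x hx).differentiableAt.differentiableWithinAt

theorem norm_le_of_segment_subset (hW : IsWKBHierarchy Ω c a W) (hΩ : IsOpen Ω)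
    (hc : ContinuousOn c Ω) (ha : ContinuousOn a Ω) {y x : ℂ} (hseg : segment ℝ y x ⊆ Ω)
    {Mc Ma C : ℝ} (hMc : ∀ z ∈ segment ℝ y x, ‖c z‖ ≤ Mc)
    (hMa : ∀ z ∈ segment ℝ y x, ‖a z‖ ≤ Ma) (hy : ∀ m, ‖W m y‖ ≤ C ^ m / m !) (m : ℕ) :
    ‖W m x‖ ≤ (Real.exp (2 * (Ma * ‖x - y‖)) * (C + Mc * ‖x - y‖)) ^ m / m ! := by
  set γ : ℝ → ℂ := ⇑(AffineMap.lineMap (k := ℝ) y x)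
  have hγseg (τ : ℝ) (hτ : τ ∈ Icc (0 : ℝ) 1) : γ τ ∈ segment ℝ y x :=
    lineMap_mem_segment ℝ y x hτ
  have hMa₀ : 0 ≤ Ma := (norm_nonneg _).trans (hMa y (left_mem_segment ℝ y x))
  obtain ⟨Qa, hQa₀, hQa, hQaL⟩ := exists_primitive_comp_lineMap hΩ ha hseg hMa
  have := norm_le_pow_div_factorial_of_hasDerivAt (u := fun m τ => W m (γ τ))
    (p := fun τ => c (γ τ) * (x - y)) (q := fun m τ => if Odd m then a (γ τ) * (x - y) else 0)
    (Q := fun m => if Odd m then Qa else 0) (M := Mc * ‖x - y‖) (L := Ma * ‖x - y‖)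
    (mul_nonneg ((norm_nonneg _).trans (hMc y (left_mem_segment ℝ y x))) (norm_nonneg _))
    (funext fun τ => by simp [hW.zero])
    ((hc.comp AffineMap.lineMap_continuous.continuousOn fun τ hτ => hseg (hγseg τ hτ)).mul
      continuousOn_const)
    (fun τ hτ => by
      rw [norm_mul]
      exact mul_le_mul_of_nonneg_right (hMc _ (hγseg τ hτ)) (norm_nonneg _))
    (fun m τ hτ => by
      split_ifs
      exacts [hQa τ hτ, hasDerivAt_const τ 0])
    (fun m => by split_ifs <;> simp [hQa₀])
    (fun m τ hτ => by
      split_ifs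
      exacts [hQaL τ hτ, by simpa using mul_nonneg hMa₀ (norm_nonneg (x - y))])
    (fun m τ hτ => ((hW.hasDerivAt m (γ τ) (hseg (hγseg τ hτ))).comp τ
      AffineMap.hasDerivAt_lineMap).congr_deriv (by split_ifs <;> ring))
    (by simpa [γ] using hy) m (t := 1) ⟨zero_le_one, le_rfl⟩
  simpa [γ] using this

theorem exists_norm_le_pow_div_factorial_closedBall (hW : IsWKBHierarchy Ω c a W)
    (hΩ : IsOpen Ω) (hc : ContinuousOn c Ω) (ha : ContinuousOn a Ω) {y : ℂ} {r : ℝ}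
    (hr : closedBall y r ⊆ Ω) {C : ℝ} (hy : ∀ m, ‖W m y‖ ≤ C ^ m / m !) :
    ∃ E, ∀ x ∈ closedBall y r, ∀ m, ‖W m x‖ ≤ E ^ m / m ! := by
  obtain ⟨Mc, hMc⟩ := (isCompact_closedBall y r).exists_bound_of_continuousOn (hc.mono hr)
  obtain ⟨Ma, hMa⟩ := (isCompact_closedBall y r).exists_bound_of_continuousOn (ha.mono hr)
  refine ⟨Real.exp (2 * (Ma * r)) * (C + Mc * r), fun x hx m => ?_⟩
  have hseg : segment ℝ y x ⊆ closedBall y r :=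
    (convex_closedBall y r).segment_subset (mem_closedBall_self (nonneg_of_mem_closedBall hx)) hx
  have hxy : ‖x - y‖ ≤ r := mem_closedBall_iff_norm.mp hx
  have hC : 0 ≤ C := by simpa using (norm_nonneg _).trans (hy 1)
  have hMc₀ : 0 ≤ Mc := (norm_nonneg _).trans (hMc x hx)
  have hMa₀ : 0 ≤ Ma := (norm_nonneg _).trans (hMa x hx)
  refine (hW.norm_le_of_segment_subset hΩ hc ha (hseg.trans hr) (fun z hz => hMc z (hseg hz))
    (fun z hz => hMa z (hseg hz)) hy m).trans ?_
  gcongr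

theorem eventually_norm_le_pow_div_factorial (hW : IsWKBHierarchy Ω c a W) (hΩ : IsOpen Ω)
    (hΩc : IsPreconnected Ω) (hc : ContinuousOn c Ω) (ha : ContinuousOn a Ω) {x₀ : ℂ}
    (hx₀ : x₀ ∈ Ω) {C : ℝ} (h₀ : ∀ m, ‖W m x₀‖ ≤ C ^ m / m !) {y : ℂ} (hy : y ∈ Ω) :
    ∃ E, ∀ᶠ x in 𝓝 y, ∀ m, ‖W m x‖ ≤ E ^ m / m ! := by
  have hball {z : ℂ} {r : ℝ} (hr : closedBall z r ⊆ Ω) (hz : ∃ C, ∀ m, ‖W m z‖ ≤ C ^ m / m !) :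
      ∃ E, ∀ x ∈ closedBall z r, ∀ m, ‖W m x‖ ≤ E ^ m / m ! :=
    hz.elim fun _ hC => hW.exists_norm_le_pow_div_factorial_closedBall hΩ hc ha hr hC
  have hy' : ∃ C, ∀ m, ‖W m y‖ ≤ C ^ m / m ! :=
    hΩc.induction_closedBall (P := fun z => ∃ C, ∀ m, ‖W m z‖ ≤ C ^ m / m !) hΩ
      (fun _ _ hr hz x hx => (hball hr hz).imp fun _ hE => hE x hx) hx₀ hy ⟨C, h₀⟩
  obtain ⟨r, hr, hsub⟩ := nhds_basis_closedBall.mem_iff.mp (hΩ.mem_nhds hy)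
  obtain ⟨E, hE⟩ := hball hsub hy'
  exact ⟨E, eventually_of_mem (closedBall_mem_nhds y hr) hE⟩

end IsWKBHierarchy

namespace WKBRec

variable {Ω : Set ℂ} {h : ℝ} {s : ℂ} {sq H : ℂ → ℂ} {x₀ : ℂ} {w : ℤ → ℂ → ℂ}

theorem isWKBHierarchy (hw : WKBRec Ω h s sq H x₀ w) :
    IsWKBHierarchy Ω (fun x => deriv H x / H x) (fun x => s * (2 * sq x / h))
      (fun m => w ((m : ℤ) - 1)) := by
  obtain ⟨hw_neg, hw₀, hrec, -⟩ := hw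
  refine ⟨funext fun x => by simpa using hw_neg x, fun m x hx => ?_⟩
  obtain ⟨k, rfl | rfl⟩ := Nat.even_or_odd' m
  · rcases k with _ | k
    · have : w 0 = fun _ => 1 := funext hw₀
      simpa [this, hw_neg] using hasDerivAt_const x (1 : ℂ)
    · have e₁ : ((2 * (k + 1) + 1 : ℕ) : ℤ) - 1 = 2 * ((k : ℤ) + 1) := by push_cast; ring
      have e₂ : ((2 * (k + 1) : ℕ) : ℤ) - 1 = 2 * ((k : ℤ) + 1) - 1 := by push_cast; ring
      have hk : ¬Odd (2 * (k + 1)) := Nat.not_odd_iff_even.mpr (even_two_mul _)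
      simpa only [e₁, e₂, if_neg hk, zero_mul, sub_zero] using (hrec (k + 1) (by omega) x hx).1
  · have e₁ : ((2 * k + 1 + 1 : ℕ) : ℤ) - 1 = 2 * ((k : ℤ) + 1) - 1 := by push_cast; ring
    have e₂ : ((2 * k + 1 : ℕ) : ℤ) - 1 = 2 * ((k : ℤ) + 1) - 2 := by push_cast; ring
    simpa only [e₁, e₂, if_pos (odd_two_mul_add_one k)] using (hrec (k + 1) (by omega) x hx).2

theorem norm_le_one_div_factorial (hw : WKBRec Ω h s sq H x₀ w) (m : ℕ) :
    ‖w ((m : ℤ) - 1) x₀‖ ≤ 1 ^ m / m ! := by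
  rcases m with _ | _ | m
  · simp [hw.1]
  · simp [hw.2.1]
  · rw [hw.2.2.2 _ (by omega), norm_zero]
    positivity

end WKBRec

theorem wkb_series_converges_general
    (A : ℂ → ℂ) (lam : ℂ) (Ω : Set ℂ)
    (hΩopen : IsOpen Ω) (hΩsc : SimplyConnectedSpace Ω)
    (sq H : ℂ → ℂ)
    (hsq_an : AnalyticOnNhd ℂ sq Ω) (hH_an : AnalyticOnNhd ℂ H Ω)
    (hH : ∀ x ∈ Ω, H x ≠ 0 ∧ (H x) ^ 4 = (A x + lam) / (A x - lam))
    (h : ℝ) (s : ℂ)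
    (x₀ : ℂ) (hx₀ : x₀ ∈ Ω)
    (w : ℤ → ℂ → ℂ) (hw : WKBRec Ω h s sq H x₀ w) :
    ∃ U ∈ nhds x₀,
      (∀ x ∈ U, Summable (fun n : ℕ => ‖w (2 * (n : ℤ)) x‖) ∧
                Summable (fun n : ℕ => ‖w (2 * (n : ℤ) - 1) x‖)) ∧
      ∃ we wo : ℂ → ℂ, AnalyticOnNhd ℂ we Ω ∧ AnalyticOnNhd ℂ wo Ω ∧
        ∀ x ∈ U ∩ Ω, we x = ∑' n : ℕ, w (2 * (n : ℤ)) x ∧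
                     wo x = ∑' n : ℕ, w (2 * (n : ℤ) - 1) x := by
  set W : ℕ → ℂ → ℂ := fun m => w ((m : ℤ) - 1)
  have hW := hw.isWKBHierarchy
  have hc : ContinuousOn (fun x => deriv H x / H x) Ω :=
    hH_an.deriv.continuousOn.div hH_an.continuousOn fun x hx => (hH x hx).1
  have ha : ContinuousOn (fun x => s * (2 * sq x / h)) Ω := by
    have := hsq_an.continuousOn
    fun_prop
  have hbound (y : ℂ) (hy : y ∈ Ω) : ∃ E, ∀ᶠ x in 𝓝 y, ∀ m, ‖W m x‖ ≤ E ^ m / m ! :=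
    hW.eventually_norm_le_pow_div_factorial hΩopen
      (isPreconnected_iff_preconnectedSpace.mpr inferInstance) hc ha hx₀
      hw.norm_le_one_div_factorial hy
  have hsummable {k : ℕ → ℕ} (hk : Function.Injective k) (x : ℂ) (hx : x ∈ Ω) :
      Summable fun n => ‖W (k n) x‖ :=
    (hbound x hx).elim fun _ hE => summable_norm_comp_of_norm_le_pow_div_factorial
      hE.self_of_nhds hk
  have heven_inj : Function.Injective fun n : ℕ => 2 * n + 1 := fun m n hmn => by simpa using hmn
  have hodd_inj : Function.Injective fun n : ℕ => 2 * n := fun m n hmn => by simpa using hmn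
  have heven (n : ℕ) : w (2 * n) = W (2 * n + 1) := by simp [W]
  have hodd (n : ℕ) : w (2 * n - 1) = W (2 * n) := by simp [W]
  have hanalytic {k : ℕ → ℕ} (hk : Function.Injective k) :
      AnalyticOnNhd ℂ (fun x => ∑' n, W (k n) x) Ω :=
    analyticOnNhd_tsum_comp_of_norm_le_pow_div_factorial hΩopen hW.differentiableOn hbound hk
  refine ⟨Ω, hΩopen.mem_nhds hx₀, fun x hx => ?_, _, _, hanalytic heven_inj,
    hanalytic hodd_inj, fun x _ => ?_⟩ <;> simp only [heven, hodd, and_self]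
  exact ⟨hsummable heven_inj x hx, hsummable hodd_inj x hx⟩

/-- **Proposition 2.1.** Absolute convergence of `w_even^±` and `w_odd^±` near the base
point `x₀`, and analytic extension of the sums to all of `Ω`. -/
theorem wkb_series_converges
    (A : ℂ → ℂ) (lam : ℂ) (Ω : Set ℂ)
    (hΩopen : IsOpen Ω) (hΩsc : SimplyConnectedSpace Ω)
    (hA : AnalyticOnNhd ℂ A Ω)
    (hnv : ∀ x ∈ Ω, A x ^ 2 - lam ^ 2 ≠ 0)
    (sq H : ℂ → ℂ)
    (hsq_an : AnalyticOnNhd ℂ sq Ω) (hH_an : AnalyticOnNhd ℂ H Ω)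
    (hsq : ∀ x ∈ Ω, sq x ^ 2 = A x ^ 2 - lam ^ 2)
    (hH : ∀ x ∈ Ω, H x ≠ 0 ∧ (H x) ^ 4 = (A x + lam) / (A x - lam))
    (h : ℝ) (hh : 0 < h) (s : ℂ) (hs : s = 1 ∨ s = -1)
    (x₀ : ℂ) (hx₀ : x₀ ∈ Ω)
    (w : ℤ → ℂ → ℂ) (hw : WKBRec Ω h s sq H x₀ w) :
    ∃ U ∈ nhds x₀,
      (∀ x ∈ U, Summable (fun n : ℕ => ‖w (2 * (n : ℤ)) x‖) ∧
                Summable (fun n : ℕ => ‖w (2 * (n : ℤ) - 1) x‖)) ∧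
      ∃ we wo : ℂ → ℂ, AnalyticOnNhd ℂ we Ω ∧ AnalyticOnNhd ℂ wo Ω ∧
        ∀ x ∈ U ∩ Ω, we x = ∑' n : ℕ, w (2 * (n : ℤ)) x ∧
                     wo x = ∑' n : ℕ, w (2 * (n : ℤ) - 1) x :=
  wkb_series_converges_general A lam Ω hΩopen hΩsc sq H hsq_an hH_an hH h s x₀ hx₀ w hw

end
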